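/- arXiv:1707.04842 — 4 statements merged into one kernel-verified Lean document; each statement's English description precedes it below -/
import Mathlib

section
/- For every real s > 4, with W₁⁰(s) = (1/2)(1 - √(1 - 4/s)), t = s√(1 - 4/s), h, α₁, κ real with κ > 0, the function W₁¹(s) = (α₁/(2√κ))(1/t - 1/s) - h/t² satisfies 0 = 2 W₁⁰(s) W₁¹(s) + h (d/ds) W₁⁰(s) + (α₁/(√κ s)) W₁⁰(s) - W₁¹(s). -/
/-! With `r = √(1 - 4/s)` one has `2 W₁⁰ - 1 = -r` and `d W₁⁰/ds = -1/(s² r)`, so the equation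
reads `r W₁¹ = h (d/ds) W₁⁰ + (α₁/(√κ s)) W₁⁰`, a rational identity in `s` and `r`. -/

open Real

lemma one_sub_four_div_pos {x : ℝ} (hx : 4 < x) : 0 < 1 - 4 / x := by
  rw [sub_pos, div_lt_one (by linarith)]
  exact hx

lemma hasDerivAt_half_one_sub_sqrt_one_sub_four_div {x : ℝ} (hx : 4 < x) :
    HasDerivAt (fun y : ℝ => 1 / 2 * (1 - √(1 - 4 / y))) (-1 / (x ^ 2 * √(1 - 4 / x))) x := by
  have hx0 : 0 < x := by linarith
  have hu := one_sub_four_div_pos hx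
  have hr : 0 < √(1 - 4 / x) := sqrt_pos.mpr hu
  have hinner : HasDerivAt (fun y : ℝ => 1 - 4 / y) (4 / x ^ 2) x :=
    (((hasDerivAt_inv hx0.ne').const_mul 4).const_sub 1).congr_deriv (by ring)
  refine (((hinner.sqrt hu.ne').const_sub 1).const_mul (1 / 2)).congr_deriv ?_
  field_simp
  ring

lemma first_order_loop_identity {s r : ℝ} (hs : s ≠ 0) (hr : r ≠ 0) (c h : ℝ) :
    0 = 2 * (1 / 2 * (1 - r)) * (c * (1 / (s * r) - 1 / s) - h / (s * r) ^ 2)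
      + h * (-1 / (s ^ 2 * r)) + 2 * c / s * (1 / 2 * (1 - r))
      - (c * (1 / (s * r) - 1 / s) - h / (s * r) ^ 2) := by
  field_simp
  ring

theorem stmt_4_general (h α₁ κ : ℝ) (s : ℝ) (hs : s > 4)
    (W₀ W₁ : ℝ → ℝ)
    (hW₀ : ∀ x > (4:ℝ), W₀ x = (1 / 2) * (1 - Real.sqrt (1 - 4 / x)))
    (hW₁ : ∀ x > (4:ℝ), W₁ x =
      (α₁ / (2 * Real.sqrt κ)) * (1 / (x * Real.sqrt (1 - 4 / x)) - 1 / x)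
        - h / (x * Real.sqrt (1 - 4 / x)) ^ 2) :
    0 = 2 * W₀ s * W₁ s + h * deriv W₀ s + (α₁ / (Real.sqrt κ * s)) * W₀ s - W₁ s := by
  have hr : √(1 - 4 / s) ≠ 0 := (sqrt_pos.mpr (one_sub_four_div_pos hs)).ne'
  have hW₀_eq : W₀ =ᶠ[nhds s] fun x => 1 / 2 * (1 - √(1 - 4 / x)) :=
    (eventually_gt_nhds hs).mono hW₀
  have hcoeff : α₁ / (√κ * s) = 2 * (α₁ / (2 * √κ)) / s := by
    rw [mul_div_assoc', mul_div_mul_left _ _ two_ne_zero, div_div]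
  rw [hW₀_eq.deriv_eq, (hasDerivAt_half_one_sub_sqrt_one_sub_four_div hs).deriv, hW₀ s hs,
    hW₁ s hs, hcoeff]
  exact first_order_loop_identity (by linarith) hr _ _

theorem stmt_4 (h α₁ κ : ℝ) (hκ : κ > 0) (s : ℝ) (hs : s > 4)
    (W₀ W₁ : ℝ → ℝ)
    (hW₀ : ∀ x > (4:ℝ), W₀ x = (1 / 2) * (1 - Real.sqrt (1 - 4 / x)))
    (hW₁ : ∀ x > (4:ℝ), W₁ x =
      (α₁ / (2 * Real.sqrt κ)) * (1 / (x * Real.sqrt (1 - 4 / x)) - 1 / x)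
        - h / (x * Real.sqrt (1 - 4 / x)) ^ 2) :
    0 = 2 * W₀ s * W₁ s + h * deriv W₀ s + (α₁ / (Real.sqrt κ * s)) * W₀ s - W₁ s :=
  stmt_4_general h α₁ κ s hs W₀ W₁ hW₀ hW₁
end

section
/- Let a < b be real numbers and define W₂⁰(s₁,s₂) = (s₁s₂ - (a+b)(s₁+s₂)/2 + ab)/(2(s₁-s₂)²√((s₁-a)(s₁-b)(s₂-a)(s₂-b))) - 1/(2(s₁-s₂)²) for s₁, s₂ > b with s₁ ≠ s₂. Then for every s > b, the limit of W₂⁰(s₁,s₂) as (s₁,s₂) → (s,s) exists and equals (b-a)²/(16(s-a)²(s-b)²). -/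
open Filter Topology

theorem stmt_5 (a b : ℝ) (hab : a < b)
    (W₂ : ℝ → ℝ → ℝ)
    (hW₂ : ∀ s₁ s₂, s₁ > b → s₂ > b → s₁ ≠ s₂ →
      W₂ s₁ s₂ = (s₁ * s₂ - (a + b) * (s₁ + s₂) / 2 + a * b)
          / (2 * (s₁ - s₂) ^ 2 *
            Real.sqrt ((s₁ - a) * (s₁ - b) * (s₂ - a) * (s₂ - b)))
        - 1 / (2 * (s₁ - s₂) ^ 2))
    (s : ℝ) (hs : s > b) :
    Tendsto (fun p : ℝ × ℝ => W₂ p.1 p.2)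
      (nhdsWithin (s, s) {p : ℝ × ℝ | p.1 > b ∧ p.2 > b ∧ p.1 ≠ p.2})
      (nhds ((b - a) ^ 2 / (16 * (s - a) ^ 2 * (s - b) ^ 2))) := by
  have hsa : (0:ℝ) < s - a := by linarith
  have hsb : (0:ℝ) < s - b := by linarith
  set g : ℝ × ℝ → ℝ := fun p =>
    (b - a) ^ 2 / (8 * Real.sqrt ((p.1 - a) * (p.1 - b) * (p.2 - a) * (p.2 - b)) *
      ((p.1 * p.2 - (a + b) * (p.1 + p.2) / 2 + a * b) +
        Real.sqrt ((p.1 - a) * (p.1 - b) * (p.2 - a) * (p.2 - b)))) with hg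
  -- key algebraic identity
  have key : ∀ x y : ℝ, b < x → b < y → x ≠ y → W₂ x y = g (x, y) := by
    intro x y hx hy hxy
    have hxa : (0:ℝ) < x - a := by linarith
    have hxb : (0:ℝ) < x - b := by linarith
    have hya : (0:ℝ) < y - a := by linarith
    have hyb : (0:ℝ) < y - b := by linarith
    have hxy2 : (0:ℝ) < (x - y) ^ 2 := by
      have : x - y ≠ 0 := sub_ne_zero.mpr hxy
      positivity
    rw [hW₂ x y hx hy hxy]
    simp only [hg]
    set t := Real.sqrt ((x - a) * (x - b) * (y - a) * (y - b)) with htdef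
    have hP0 : (0:ℝ) < (x - a) * (x - b) * (y - a) * (y - b) := by positivity
    have ht : 0 < t := Real.sqrt_pos.mpr hP0
    have ht2 : t ^ 2 = (x - a) * (x - b) * (y - a) * (y - b) := Real.sq_sqrt hP0.le
    have hN0 : (0:ℝ) < x * y - (a + b) * (x + y) / 2 + a * b := by
      have h : x * y - (a + b) * (x + y) / 2 + a * b
          = ((x - a) * (y - b) + (x - b) * (y - a)) / 2 := by ring
      rw [h]; positivity
    have hNt : ((x * y - (a + b) * (x + y) / 2 + a * b) - t) *
          ((x * y - (a + b) * (x + y) / 2 + a * b) + t)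
        = (b - a) ^ 2 * (x - y) ^ 2 / 4 := by
      have h2 : ((x * y - (a + b) * (x + y) / 2 + a * b) - t) *
            ((x * y - (a + b) * (x + y) / 2 + a * b) + t)
          = (x * y - (a + b) * (x + y) / 2 + a * b) ^ 2 - t ^ 2 := by ring
      rw [h2, ht2]; ring
    rw [div_sub_div _ _ (by positivity) (by positivity),
      div_eq_div_iff (by positivity) (by positivity)]
    linear_combination (16 * t * (x - y) ^ 2) * hNt
  have hsqrt : Real.sqrt ((s - a) * (s - b) * (s - a) * (s - b)) = (s - a) * (s - b) := by
    have h1 : (s - a) * (s - b) * (s - a) * (s - b) = ((s - a) * (s - b)) ^ 2 := by ring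
    rw [h1, Real.sqrt_sq (by positivity)]
  have hgs : g (s, s) = (b - a) ^ 2 / (16 * (s - a) ^ 2 * (s - b) ^ 2) := by
    simp only [hg, hsqrt]
    congr 1
    ring
  have hc : ContinuousAt g (s, s) := by
    apply ContinuousAt.div
    · fun_prop
    · fun_prop
    · simp only [hsqrt]
      have h : s * s - (a + b) * (s + s) / 2 + a * b = (s - a) * (s - b) := by ring
      rw [h]
      positivity
  have hgt : Tendsto g (nhdsWithin (s, s) {p : ℝ × ℝ | p.1 > b ∧ p.2 > b ∧ p.1 ≠ p.2})
      (nhds ((b - a) ^ 2 / (16 * (s - a) ^ 2 * (s - b) ^ 2))) := by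
    rw [← hgs]
    exact hc.continuousWithinAt.tendsto
  refine hgt.congr' ?_
  filter_upwards [self_mem_nhdsWithin] with p hp
  exact (key p.1 p.2 hp.1 hp.2.1 hp.2.2).symm
end

section
/- Let α̃ > 0 and define a₀^{(k)} for k ≥ 0 by the Narayana polynomial a₀^{(k)} = (1/k)∑_{j=1}^k binom(k,j)binom(k,j-1)(α̃+1)^{j-1} for k ≥ 1 and a₀^{(0)} = 1. Then the negative-moment leading coefficients a₀^{(-k)}, defined by the large-t expansion of the same resolvent around 0, satisfy a₀^{(-k)} = α̃^{1-2k} a₀^{(k-1)} for all k ≥ 1. Equivalently, ∫_a^b x^{-k} ρ(x) dx = α̃^{1-2k} ∫_a^b x^{k-1} ρ(x) dx, where ρ(x) = (1/(2πx))√((x-a)(b-x)) on (a,b), a = (√(α̃+1)-1)², b = (√(α̃+1)+1)². -/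
open Set intervalIntegral

theorem stmt_11 (α : ℝ) (hα : α > 0) (k : ℕ) (hk : 1 ≤ k) :
    (∫ x in ((Real.sqrt (α + 1) - 1) ^ 2)..((Real.sqrt (α + 1) + 1) ^ 2),
        x ^ (-(k : ℤ)) * ((1 / (2 * Real.pi * x)) *
          Real.sqrt ((x - (Real.sqrt (α + 1) - 1) ^ 2) * ((Real.sqrt (α + 1) + 1) ^ 2 - x))))
      = α ^ (1 - 2 * (k : ℤ)) *
        ∫ x in ((Real.sqrt (α + 1) - 1) ^ 2)..((Real.sqrt (α + 1) + 1) ^ 2),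
          x ^ (k - 1) * ((1 / (2 * Real.pi * x)) *
            Real.sqrt ((x - (Real.sqrt (α + 1) - 1) ^ 2) * ((Real.sqrt (α + 1) + 1) ^ 2 - x))) := by
  obtain ⟨m, rfl⟩ : ∃ m, k = m + 1 := ⟨k - 1, (Nat.succ_pred_eq_of_pos hk).symm⟩
  set s := Real.sqrt (α + 1) with hsdef
  have hs2 : s ^ 2 = α + 1 := Real.sq_sqrt (by linarith)
  have hs0 : 0 ≤ s := Real.sqrt_nonneg _
  have hs1 : 1 < s := by nlinarith
  set a := (s - 1) ^ 2 with hadef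
  set b := (s + 1) ^ 2 with hbdef
  have ha : 0 < a := pow_pos (by linarith) 2
  have hb : 0 < b := pow_pos (by linarith) 2
  have hab : a * b = α ^ 2 := by
    have h : a * b = (s ^ 2 - 1) ^ 2 := by rw [hadef, hbdef]; ring
    rw [h, hs2]; ring
  have hlt : a < b := by nlinarith
  set G : ℝ → ℝ := fun x => x ^ (-((m + 1 : ℕ) : ℤ)) * ((1 / (2 * Real.pi * x)) *
      Real.sqrt ((x - a) * (b - x))) with hG
  set H : ℝ → ℝ := fun x => x ^ ((m + 1) - 1) * ((1 / (2 * Real.pi * x)) *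
      Real.sqrt ((x - a) * (b - x))) with hH
  have huIcc : Set.uIcc a b = Icc a b := uIcc_of_le hlt.le
  have hpos : ∀ x ∈ Set.uIcc a b, 0 < x := by
    intro x hx; rw [huIcc] at hx; exact lt_of_lt_of_le ha hx.1
  set f : ℝ → ℝ := fun y => α ^ 2 / y with hf
  set f' : ℝ → ℝ := fun y => α ^ 2 * -(y ^ 2)⁻¹ with hf'
  have hfa : f a = b := by rw [hf]; field_simp; linarith [hab]
  have hfb : f b = a := by rw [hf]; field_simp; nlinarith [hab]
  have hGcont : ContinuousOn G {x : ℝ | 0 < x} := by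
    apply ContinuousOn.mul
    · intro x hx
      exact (continuousAt_zpow₀ x _ (Or.inl (ne_of_gt hx))).continuousWithinAt
    · apply ContinuousOn.mul
      · apply ContinuousOn.div continuousOn_const
        · fun_prop
        · intro x hx
          have h0 : (0:ℝ) < x := hx
          positivity
      · fun_prop
  have hfimage : f '' Set.uIcc a b ⊆ {x : ℝ | 0 < x} := by
    rintro _ ⟨y, hy, rfl⟩
    have := hpos y hy
    rw [hf]; show (0:ℝ) < α ^ 2 / y; positivity
  have key : (∫ x in a..b, f' x • (G ∘ f) x) = ∫ u in f a..f b, G u := by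
    apply integral_comp_smul_deriv''
    · apply ContinuousOn.div continuousOn_const continuousOn_id
      intro x hx; exact (hpos x hx).ne'
    · intro x hx
      have hx0 : x ≠ 0 := by
        rw [min_eq_left hlt.le, max_eq_right hlt.le] at hx
        exact (lt_trans ha hx.1).ne'
      have hD : HasDerivAt f (f' x) x := by
        simpa [hf, hf', div_eq_mul_inv] using (hasDerivAt_inv hx0).const_mul (α ^ 2)
      exact hD.hasDerivWithinAt
    · apply ContinuousOn.mul continuousOn_const
      apply ContinuousOn.neg
      apply ContinuousOn.inv₀ (by fun_prop)
      intro x hx; exact pow_ne_zero 2 (hpos x hx).ne'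
    · exact hGcont.mono hfimage
  have key2 : (∫ x in a..b, f' x • (G ∘ f) x) = -∫ u in a..b, G u := by
    rw [key, hfa, hfb, integral_symm]
  have hptw : ∀ x ∈ Set.uIcc a b,
      f' x • (G ∘ f) x = -(α ^ (1 - 2 * ((m + 1 : ℕ) : ℤ)) * H x) := by
    intro x hx
    have hx0 : 0 < x := hpos x hx
    have hsq : (α ^ 2 / x - a) * (b - α ^ 2 / x) = (α / x) ^ 2 * ((x - a) * (b - x)) := by
      rw [div_pow, ← hab]; field_simp
    have hsqrt : Real.sqrt ((α ^ 2 / x - a) * (b - α ^ 2 / x))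
        = (α / x) * Real.sqrt ((x - a) * (b - x)) := by
      rw [hsq, Real.sqrt_mul (sq_nonneg _), Real.sqrt_sq (by positivity)]
    have hzpow : (α ^ 2 / x) ^ (-((m + 1 : ℕ) : ℤ)) = x ^ (m + 1) / (α ^ 2) ^ (m + 1) := by
      rw [zpow_neg, zpow_natCast, div_pow, inv_div]
    have hzpow2 : α ^ (1 - 2 * ((m + 1 : ℕ) : ℤ)) = α / (α ^ 2) ^ (m + 1) := by
      rw [zpow_sub₀ hα.ne', zpow_one,
        show (2 * ((m + 1 : ℕ) : ℤ)) = ((2 * (m + 1) : ℕ) : ℤ) by push_cast; ring,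
        zpow_natCast, pow_mul]
    simp only [hf', hG, hH, hf, Function.comp, smul_eq_mul, hsqrt, hzpow, hzpow2,
      Nat.add_sub_cancel]
    field_simp
    ring
  rw [integral_congr hptw, integral_neg, integral_const_mul] at key2
  have hfin := key2
  linarith [hfin]
end

section
/- Let α̃₁, α̃₂ > 0 and set c₊, c₋ = α̃₁/(α̃₁+α̃₂+2) + 2(α̃₂+1 ± √((α̃₁+1)(α̃₂+1)(α̃₁+α̃₂+1)))/(α̃₁+α̃₂+2)². Then for all real s with s > 1, the function W(s) = α̃₂/(2(1-s)) - α̃₁/(2s) - ((α̃₁+α̃₂+2)/(2s(1-s)))√((s-c₋)(s-c₊)) satisfies W(s)² + (α̃₁/s - α̃₂/(1-s))W(s) + (α̃₁+α̃₂+1)/(s(1-s)) = 0. -/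
private lemma stmt_17_aux (α₁ α₂ s t : ℝ) (hs0 : s ≠ 0) (h1s : (1 - s) ≠ 0)
    (ht2' : (α₁ + α₂ + 2) ^ 2 * t ^ 2
      = (α₁ * (1 - s) - α₂ * s) ^ 2 - 4 * (α₁ + α₂ + 1) * s * (1 - s)) :
    (α₂ / (2 * (1 - s)) - α₁ / (2 * s)
        - ((α₁ + α₂ + 2) / (2 * s * (1 - s))) * t) ^ 2
      + (α₁ / s - α₂ / (1 - s)) *
        (α₂ / (2 * (1 - s)) - α₁ / (2 * s)
          - ((α₁ + α₂ + 2) / (2 * s * (1 - s))) * t)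
      + (α₁ + α₂ + 1) / (s * (1 - s)) = 0 := by
  have hd : (4 * s ^ 2 * (1 - s) ^ 2) ≠ 0 := by positivity
  have H : ((α₂ / (2 * (1 - s)) - α₁ / (2 * s)
        - ((α₁ + α₂ + 2) / (2 * s * (1 - s))) * t) ^ 2
      + (α₁ / s - α₂ / (1 - s)) *
        (α₂ / (2 * (1 - s)) - α₁ / (2 * s)
          - ((α₁ + α₂ + 2) / (2 * s * (1 - s))) * t)
      + (α₁ + α₂ + 1) / (s * (1 - s))) * (4 * s ^ 2 * (1 - s) ^ 2)
      = (α₁ + α₂ + 2) ^ 2 * t ^ 2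
        - ((α₁ * (1 - s) - α₂ * s) ^ 2 - 4 * (α₁ + α₂ + 1) * s * (1 - s)) := by
    field_simp
    ring
  have H1 : ((α₂ / (2 * (1 - s)) - α₁ / (2 * s)
        - ((α₁ + α₂ + 2) / (2 * s * (1 - s))) * t) ^ 2
      + (α₁ / s - α₂ / (1 - s)) *
        (α₂ / (2 * (1 - s)) - α₁ / (2 * s)
          - ((α₁ + α₂ + 2) / (2 * s * (1 - s))) * t)
      + (α₁ + α₂ + 1) / (s * (1 - s))) * (4 * s ^ 2 * (1 - s) ^ 2) = 0 := by
    rw [H]; linarith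
  exact (mul_eq_zero.mp H1).resolve_right hd


theorem stmt_17 (α₁ α₂ : ℝ) (hα₁ : α₁ > 0) (hα₂ : α₂ > 0)
    (cmin cplus : ℝ)
    (hcmin : cmin = α₁ / (α₁ + α₂ + 2)
      + 2 * (α₂ + 1 - Real.sqrt ((α₁ + 1) * (α₂ + 1) * (α₁ + α₂ + 1))) / (α₁ + α₂ + 2) ^ 2)
    (hcplus : cplus = α₁ / (α₁ + α₂ + 2)
      + 2 * (α₂ + 1 + Real.sqrt ((α₁ + 1) * (α₂ + 1) * (α₁ + α₂ + 1))) / (α₁ + α₂ + 2) ^ 2)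
    (s : ℝ) (hs : s > 1) :
    (α₂ / (2 * (1 - s)) - α₁ / (2 * s)
        - ((α₁ + α₂ + 2) / (2 * s * (1 - s))) * Real.sqrt ((s - cmin) * (s - cplus))) ^ 2
      + (α₁ / s - α₂ / (1 - s)) *
        (α₂ / (2 * (1 - s)) - α₁ / (2 * s)
          - ((α₁ + α₂ + 2) / (2 * s * (1 - s))) * Real.sqrt ((s - cmin) * (s - cplus)))
      + (α₁ + α₂ + 1) / (s * (1 - s)) = 0 := by
  have hA : (0:ℝ) < α₁ + α₂ + 2 := by linarith
  have hA' : (α₁ + α₂ + 2) ≠ 0 := ne_of_gt hA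
  have hs0 : s ≠ 0 := by linarith
  have h1s : (1 - s) ≠ 0 := by intro h; linarith
  set r := Real.sqrt ((α₁ + 1) * (α₂ + 1) * (α₁ + α₂ + 1)) with hrdef
  have hr2 : r ^ 2 = (α₁ + 1) * (α₂ + 1) * (α₁ + α₂ + 1) := by
    rw [hrdef, sq]
    exact Real.mul_self_sqrt (by positivity)
  have e1 : (α₁ + α₂ + 2) ^ 2 * (s - cmin)
      = ((α₁ + α₂ + 2) ^ 2 * s - (α₁ * (α₁ + α₂ + 2) + 2 * (α₂ + 1))) + 2 * r := by
    rw [hcmin]; field_simp; ring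
  have e2 : (α₁ + α₂ + 2) ^ 2 * (s - cplus)
      = ((α₁ + α₂ + 2) ^ 2 * s - (α₁ * (α₁ + α₂ + 2) + 2 * (α₂ + 1))) - 2 * r := by
    rw [hcplus]; field_simp; ring
  have key2 : (α₁ + α₂ + 2) ^ 4 * ((s - cmin) * (s - cplus))
      = (α₁ + α₂ + 2) ^ 2 *
        ((α₁ * (1 - s) - α₂ * s) ^ 2 - 4 * (α₁ + α₂ + 1) * s * (1 - s)) := by
    linear_combination ((α₁ + α₂ + 2) ^ 2 * (s - cplus)) * e1
      + (((α₁ + α₂ + 2) ^ 2 * s - (α₁ * (α₁ + α₂ + 2) + 2 * (α₂ + 1))) + 2 * r) * e2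
      - 4 * hr2
  have key : (α₁ + α₂ + 2) ^ 2 * ((s - cmin) * (s - cplus))
      = (α₁ * (1 - s) - α₂ * s) ^ 2 - 4 * (α₁ + α₂ + 1) * s * (1 - s) := by
    apply mul_left_cancel₀ (pow_ne_zero 2 hA')
    linear_combination key2
  have hss : (0:ℝ) < s * (s - 1) := mul_pos (by linarith) (by linarith)
  have hP1 : (0:ℝ) < α₁ + α₂ + 1 := by linarith
  have hE : (0:ℝ) ≤ (α₁ * (1 - s) - α₂ * s) ^ 2 - 4 * (α₁ + α₂ + 1) * s * (1 - s) := by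
    nlinarith [sq_nonneg (α₁ * (1 - s) - α₂ * s), mul_pos hP1 hss]
  have hApos : (0:ℝ) < (α₁ + α₂ + 2) ^ 2 := by positivity
  have hPnn : (0:ℝ) ≤ (s - cmin) * (s - cplus) := by
    have h := hE
    rw [← key] at h
    by_contra hneg
    push_neg at hneg
    have := mul_neg_of_pos_of_neg hApos hneg
    linarith
  exact stmt_17_aux α₁ α₂ s _ hs0 h1s (by
    rw [Real.sq_sqrt hPnn]
    exact key)
end
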